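/- For 1 ≤ i < j ≤ n, the set of 123-avoiding permutations of {1,...,n} with π(1) = j and π(2) = i is in bijection with the set of 123-avoiding permutations of {1,...,n-1} with first entry i, via deleting the first entry and reducing (decreasing each entry greater than j by 1). -/
import Mathlib


def Avoids123 {n : ℕ} (π : Equiv.Perm (Fin n)) : Prop :=
  ¬ ∃ i j k : Fin n, i < j ∧ j < k ∧ π i < π j ∧ π j < π k

namespace BijAux

def red (j v : ℕ) : ℕ := if v + 1 < j then v else v - 1
def lft (j v : ℕ) : ℕ := if v + 1 < j then v else v + 1

lemma red_lt {n j v : ℕ} (hj : 2 ≤ j) (hjn : j ≤ n) (hv : v < n) : red j v < n - 1 := by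
  unfold red; split <;> omega
lemma lft_lt {n j v : ℕ} (hjn : j ≤ n) (hv : v < n - 1) : lft j v < n := by
  unfold lft; split <;> omega
lemma lft_red {j v : ℕ} (hj : 2 ≤ j) (hv : v ≠ j - 1) : lft j (red j v) = v := by
  unfold red lft; split_ifs <;> omega
lemma red_lft {j v : ℕ} : red j (lft j v) = v := by
  unfold red lft; split_ifs <;> omega
lemma lft_ne {j v : ℕ} (hj : 2 ≤ j) : lft j v ≠ j - 1 := by
  unfold lft; split <;> omega
lemma red_inj {j a b : ℕ} (ha : a ≠ j - 1) (hb : b ≠ j - 1) (h : red j a = red j b) : a = b := by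
  unfold red at h; split_ifs at h <;> omega
lemma lft_inj {j a b : ℕ} (h : lft j a = lft j b) : a = b := by
  unfold lft at h; split_ifs at h <;> omega
lemma red_reflect {j a b : ℕ} (h : red j a < red j b) : a < b := by
  unfold red at h; split_ifs at h <;> omega
lemma lft_reflect {j a b : ℕ} (h : lft j a < lft j b) : a < b := by
  unfold lft at h; split_ifs at h <;> omega
lemma lft_gt {j v : ℕ} (h : j - 1 < lft j v) : j ≤ v + 1 := by
  unfold lft at h; split_ifs at h <;> omega

variable {n j : ℕ}

def fwdFun (j : ℕ) (hj : 2 ≤ j) (hjn : j ≤ n) (π : Equiv.Perm (Fin n)) :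
    Fin (n - 1) → Fin (n - 1) :=
  fun k => ⟨red j (π ⟨k.val + 1, by have := k.isLt; omega⟩).val,
    red_lt hj hjn (π _).isLt⟩

def bwdFun (j : ℕ) (hj : 2 ≤ j) (hjn : j ≤ n) (σ : Equiv.Perm (Fin (n - 1))) :
    Fin n → Fin n :=
  fun m => if h : m.val = 0 then ⟨j - 1, by omega⟩
    else ⟨lft j (σ ⟨m.val - 1, by have := m.isLt; omega⟩).val, lft_lt hjn (σ _).isLt⟩

lemma fwdFun_inj (hj : 2 ≤ j) (hjn : j ≤ n) (π : Equiv.Perm (Fin n))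
    (hπ : (π ⟨0, by omega⟩).val = j - 1) : Function.Injective (fwdFun j hj hjn π) := by
  intro a b hab
  have hne : ∀ k : Fin (n - 1), (π ⟨k.val + 1, by have := k.isLt; omega⟩).val ≠ j - 1 := by
    intro k h
    have : π ⟨k.val + 1, by have := k.isLt; omega⟩ = π ⟨0, by omega⟩ := Fin.ext (by omega)
    have := π.injective this
    simp [Fin.ext_iff] at this
  have h1 := congrArg Fin.val hab
  simp only [fwdFun] at h1
  have h2 := red_inj (hne a) (hne b) h1
  have h3 : (⟨a.val + 1, by have := a.isLt; omega⟩ : Fin n) = ⟨b.val + 1, by have := b.isLt; omega⟩ :=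
    π.injective (Fin.ext h2)
  exact Fin.ext (by simpa [Fin.ext_iff] using h3)

lemma bwdFun_inj (hj : 2 ≤ j) (hjn : j ≤ n) (σ : Equiv.Perm (Fin (n - 1))) :
    Function.Injective (bwdFun j hj hjn σ) := by
  intro a b hab
  have h1 := congrArg Fin.val hab
  simp only [bwdFun] at h1
  split_ifs at h1 with ha hb hb
  · exact Fin.ext (by omega)
  · exact absurd h1.symm (lft_ne hj)
  · exact absurd h1 (lft_ne hj)
  · have h2 := σ.injective (Fin.ext (lft_inj h1))
    simp only [Fin.mk.injEq] at h2
    exact Fin.ext (by omega)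

noncomputable def fwdPerm (hj : 2 ≤ j) (hjn : j ≤ n) (π : Equiv.Perm (Fin n))
    (hπ : (π ⟨0, by omega⟩).val = j - 1) : Equiv.Perm (Fin (n - 1)) :=
  Equiv.ofBijective _ (Finite.injective_iff_bijective.1 (fwdFun_inj hj hjn π hπ))

noncomputable def bwdPerm (hj : 2 ≤ j) (hjn : j ≤ n) (σ : Equiv.Perm (Fin (n - 1))) : Equiv.Perm (Fin n) :=
  Equiv.ofBijective _ (Finite.injective_iff_bijective.1 (bwdFun_inj hj hjn σ))

lemma fwdPerm_apply (hj : 2 ≤ j) (hjn : j ≤ n) (π : Equiv.Perm (Fin n))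
    (hπ : (π ⟨0, by omega⟩).val = j - 1) (k : Fin (n - 1)) :
    fwdPerm hj hjn π hπ k = fwdFun j hj hjn π k := rfl

lemma bwdPerm_apply (hj : 2 ≤ j) (hjn : j ≤ n) (σ : Equiv.Perm (Fin (n - 1))) (m : Fin n) :
    bwdPerm hj hjn σ m = bwdFun j hj hjn σ m := rfl


lemma fwdFun_val (hj : 2 ≤ j) (hjn : j ≤ n) (π : Equiv.Perm (Fin n)) (k : Fin (n - 1)) :
    (fwdFun j hj hjn π k).val = red j (π ⟨k.val + 1, by have := k.isLt; omega⟩).val := rfl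

lemma bwdFun_val_zero (hj : 2 ≤ j) (hjn : j ≤ n) (σ : Equiv.Perm (Fin (n - 1)))
    (m : Fin n) (h : m.val = 0) : (bwdFun j hj hjn σ m).val = j - 1 := by
  unfold bwdFun; rw [dif_pos h]

lemma bwdFun_val (hj : 2 ≤ j) (hjn : j ≤ n) (σ : Equiv.Perm (Fin (n - 1)))
    (m : Fin n) (h : m.val ≠ 0) :
    (bwdFun j hj hjn σ m).val = lft j (σ ⟨m.val - 1, by have := m.isLt; omega⟩).val := by
  unfold bwdFun; rw [dif_neg h]

lemma bwd_fwd (hj : 2 ≤ j) (hjn : j ≤ n) (π : Equiv.Perm (Fin n))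
    (hπ : (π ⟨0, by omega⟩).val = j - 1) :
    bwdPerm hj hjn (fwdPerm hj hjn π hπ) = π := by
  apply Equiv.ext
  intro m
  apply Fin.ext
  rw [bwdPerm_apply]
  by_cases h0 : m.val = 0
  · rw [bwdFun_val_zero hj hjn _ m h0]
    have : m = ⟨0, by omega⟩ := Fin.ext h0
    rw [this, hπ]
  · rw [bwdFun_val hj hjn _ m h0]
    have h1 : ((fwdPerm hj hjn π hπ) ⟨m.val - 1, by have := m.isLt; omega⟩).val
        = red j (π ⟨(m.val - 1) + 1, by have := m.isLt; omega⟩).val := rfl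
    rw [h1]
    have hm : (⟨(m.val - 1) + 1, by have := m.isLt; omega⟩ : Fin n) = m := Fin.ext (by simp; omega)
    rw [hm]
    have hne : (π m).val ≠ j - 1 := by
      intro h
      have : π m = π ⟨0, by omega⟩ := Fin.ext (by rw [hπ]; exact h)
      exact h0 (by simpa [Fin.ext_iff] using π.injective this)
    exact lft_red hj hne

lemma bwdPerm_zero (hj : 2 ≤ j) (hjn : j ≤ n) (σ : Equiv.Perm (Fin (n - 1))) :
    ((bwdPerm hj hjn σ) ⟨0, by omega⟩).val = j - 1 :=
  bwdFun_val_zero hj hjn σ _ rfl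

lemma fwd_bwd (hj : 2 ≤ j) (hjn : j ≤ n) (σ : Equiv.Perm (Fin (n - 1)))
    (hσ : ((bwdPerm hj hjn σ) ⟨0, by omega⟩).val = j - 1) :
    fwdPerm hj hjn (bwdPerm hj hjn σ) hσ = σ := by
  apply Equiv.ext
  intro k
  apply Fin.ext
  have h1 : ((fwdPerm hj hjn (bwdPerm hj hjn σ) hσ) k).val
      = red j ((bwdPerm hj hjn σ) ⟨k.val + 1, by have := k.isLt; omega⟩).val := rfl
  rw [h1, bwdPerm_apply, bwdFun_val hj hjn σ _ (by simp)]
  have hk : (⟨(⟨k.val + 1, by have := k.isLt; omega⟩ : Fin n).val - 1,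
      by have := k.isLt; omega⟩ : Fin (n - 1)) = k := Fin.ext (by simp)
  rw [hk, red_lft]


lemma avoids_fwd (hj : 2 ≤ j) (hjn : j ≤ n) (π : Equiv.Perm (Fin n))
    (hπ : (π ⟨0, by omega⟩).val = j - 1) (hav : Avoids123 π) :
    Avoids123 (fwdPerm hj hjn π hπ) := by
  rintro ⟨a, b, c, hab, hbc, h1, h2⟩
  apply hav
  rw [Fin.lt_def] at hab hbc h1 h2
  simp only [fwdPerm_apply] at h1 h2
  rw [fwdFun_val hj hjn π, fwdFun_val hj hjn π] at h1
  rw [fwdFun_val hj hjn π, fwdFun_val hj hjn π] at h2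
  refine ⟨⟨a.val + 1, by have := a.isLt; omega⟩, ⟨b.val + 1, by have := b.isLt; omega⟩,
    ⟨c.val + 1, by have := c.isLt; omega⟩, Fin.mk_lt_mk.mpr (by omega),
    Fin.mk_lt_mk.mpr (by omega), ?_, ?_⟩
  · rw [Fin.lt_def]; exact red_reflect h1
  · rw [Fin.lt_def]; exact red_reflect h2

lemma avoids_bwd {i : ℕ} (hi : 1 ≤ i) (hij : i < j) (hj : 2 ≤ j) (hjn : j ≤ n)
    (σ : Equiv.Perm (Fin (n - 1))) (hav : Avoids123 σ)
    (hσ0 : (σ ⟨0, by omega⟩).val = i - 1) :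
    Avoids123 (bwdPerm hj hjn σ) := by
  rintro ⟨a, b, c, hab, hbc, h1, h2⟩
  apply hav
  rw [Fin.lt_def] at hab hbc h1 h2
  rw [bwdPerm_apply, bwdPerm_apply] at h1 h2
  have hb0 : b.val ≠ 0 := by omega
  have hc0 : c.val ≠ 0 := by omega
  have hn1 : 0 < n - 1 := by have := b.isLt; omega
  have han : a.val - 1 < n - 1 := by have := a.isLt; omega
  have hbn : b.val - 1 < n - 1 := by have := b.isLt; omega
  have hcn : c.val - 1 < n - 1 := by have := c.isLt; omega
  rw [bwdFun_val hj hjn σ b hb0] at h1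
  rw [bwdFun_val hj hjn σ b hb0, bwdFun_val hj hjn σ c hc0] at h2
  have hlt2 : (σ ⟨b.val - 1, hbn⟩).val < (σ ⟨c.val - 1, hcn⟩).val := lft_reflect h2
  by_cases ha0 : a.val = 0
  · rw [bwdFun_val_zero hj hjn σ a ha0] at h1
    have hjb : j ≤ (σ ⟨b.val - 1, hbn⟩).val + 1 := lft_gt h1
    have h0v : (σ ⟨0, hn1⟩).val = i - 1 := hσ0
    have hb1 : b.val - 1 ≠ 0 := by
      intro h
      have heq : (⟨b.val - 1, hbn⟩ : Fin (n - 1)) = ⟨0, hn1⟩ := Fin.ext h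
      rw [heq, h0v] at hjb
      omega
    exact ⟨⟨0, hn1⟩, ⟨b.val - 1, hbn⟩, ⟨c.val - 1, hcn⟩, Fin.mk_lt_mk.mpr (by omega),
      Fin.mk_lt_mk.mpr (by omega), Fin.lt_def.mpr (by omega), Fin.lt_def.mpr hlt2⟩
  · rw [bwdFun_val hj hjn σ a ha0] at h1
    have hlt1 : (σ ⟨a.val - 1, han⟩).val < (σ ⟨b.val - 1, hbn⟩).val := lft_reflect h1
    exact ⟨⟨a.val - 1, han⟩, ⟨b.val - 1, hbn⟩, ⟨c.val - 1, hcn⟩, Fin.mk_lt_mk.mpr (by omega),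
      Fin.mk_lt_mk.mpr (by omega), Fin.lt_def.mpr hlt1, Fin.lt_def.mpr hlt2⟩


lemma fwd_first {i : ℕ} (hi : 1 ≤ i) (hij : i < j) (hj : 2 ≤ j) (hjn : j ≤ n)
    (π : Equiv.Perm (Fin n)) (hπ : (π ⟨0, by omega⟩).val = j - 1)
    (hπ1 : (π ⟨1, by omega⟩).val = i - 1) :
    ∀ m : Fin (n - 1), m.val = 0 → ((fwdPerm hj hjn π hπ) m).val + 1 = i := by
  intro m hm
  have hv : ((fwdPerm hj hjn π hπ) m).val
      = red j (π ⟨m.val + 1, by have := m.isLt; omega⟩).val := rfl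
  rw [hv]
  have hidx : (⟨m.val + 1, by have := m.isLt; omega⟩ : Fin n) = ⟨1, by omega⟩ :=
    Fin.ext (show m.val + 1 = 1 by omega)
  rw [hidx, hπ1]
  unfold red
  rw [if_pos (by omega)]
  omega

lemma bwd_first {i : ℕ} (hi : 1 ≤ i) (hij : i < j) (hj : 2 ≤ j) (hjn : j ≤ n)
    (σ : Equiv.Perm (Fin (n - 1))) (hσ0 : (σ ⟨0, by omega⟩).val = i - 1) :
    ∀ m : Fin n, (m.val = 0 → ((bwdPerm hj hjn σ) m).val + 1 = j) ∧
                 (m.val = 1 → ((bwdPerm hj hjn σ) m).val + 1 = i) := by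
  intro m
  have hp : 0 < n - 1 := by omega
  have h0v : (σ ⟨0, hp⟩).val = i - 1 := hσ0
  constructor
  · intro hm
    rw [bwdPerm_apply, bwdFun_val_zero hj hjn σ m hm]
    omega
  · intro hm
    rw [bwdPerm_apply, bwdFun_val hj hjn σ m (by omega)]
    have hidx : (⟨m.val - 1, by have := m.isLt; omega⟩ : Fin (n - 1)) = ⟨0, hp⟩ :=
      Fin.ext (show m.val - 1 = 0 by omega)
    rw [hidx, h0v]
    unfold lft
    rw [if_pos (by omega)]
    omega

end BijAux

/-- There is a bijection between the 123-avoiding permutations of `{1,…,n}`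
starting with `j, i` and the 123-avoiding permutations of `{1,…,n-1}` with
first entry `i`, given by deleting the first entry and reducing (entries
greater than `j` are decreased by `1`).  Values are 1-indexed, so the value of
`π` at a position `m : Fin n` is `(π m : ℕ) + 1`. -/
theorem bij_delete_first_21_prefix (n i j : ℕ) (hi : 1 ≤ i) (hij : i < j) (hjn : j ≤ n) :
    ∃ e : {π : Equiv.Perm (Fin n) // Avoids123 π ∧
            ∀ m : Fin n, (m.val = 0 → ((π m : Fin n) : ℕ) + 1 = j) ∧
                         (m.val = 1 → ((π m : Fin n) : ℕ) + 1 = i)} ≃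
          {σ : Equiv.Perm (Fin (n - 1)) // Avoids123 σ ∧
            ∀ m : Fin (n - 1), m.val = 0 → ((σ m : Fin (n - 1)) : ℕ) + 1 = i},
      ∀ π (k : Fin (n - 1)),
        (((e π).val k : Fin (n - 1)) : ℕ) =
          if ((π.val ⟨k.val + 1, by have := k.isLt; omega⟩ : Fin n) : ℕ) + 1 < j
          then ((π.val ⟨k.val + 1, by have := k.isLt; omega⟩ : Fin n) : ℕ)
          else ((π.val ⟨k.val + 1, by have := k.isLt; omega⟩ : Fin n) : ℕ) - 1 := by
  have hj : 2 ≤ j := by omega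
  have hzero : ∀ π : Equiv.Perm (Fin n),
      (∀ m : Fin n, (m.val = 0 → (π m).val + 1 = j) ∧ (m.val = 1 → (π m).val + 1 = i)) →
      (π ⟨0, by omega⟩).val = j - 1 := by
    intro π h
    have := (h ⟨0, by omega⟩).1 rfl
    omega
  have hone : ∀ π : Equiv.Perm (Fin n),
      (∀ m : Fin n, (m.val = 0 → (π m).val + 1 = j) ∧ (m.val = 1 → (π m).val + 1 = i)) →
      (π ⟨1, by omega⟩).val = i - 1 := by
    intro π h
    have := (h ⟨1, by omega⟩).2 rfl
    omega
  have hzero' : ∀ σ : Equiv.Perm (Fin (n - 1)),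
      (∀ m : Fin (n - 1), m.val = 0 → (σ m).val + 1 = i) →
      (σ ⟨0, by omega⟩).val = i - 1 := by
    intro σ h
    have := h ⟨0, by omega⟩ rfl
    omega
  refine ⟨{
    toFun := fun p =>
      ⟨BijAux.fwdPerm hj hjn p.1 (hzero p.1 p.2.2),
        BijAux.avoids_fwd hj hjn p.1 (hzero p.1 p.2.2) p.2.1,
        BijAux.fwd_first hi hij hj hjn p.1 (hzero p.1 p.2.2) (hone p.1 p.2.2)⟩
    invFun := fun s =>
      ⟨BijAux.bwdPerm hj hjn s.1,
        BijAux.avoids_bwd hi hij hj hjn s.1 s.2.1 (hzero' s.1 s.2.2),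
        BijAux.bwd_first hi hij hj hjn s.1 (hzero' s.1 s.2.2)⟩
    left_inv := fun p => Subtype.ext (BijAux.bwd_fwd hj hjn p.1 (hzero p.1 p.2.2))
    right_inv := fun s => Subtype.ext (BijAux.fwd_bwd hj hjn s.1 (BijAux.bwdPerm_zero hj hjn s.1)) }, ?_⟩
  intro p k
  rfl
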